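/- There exist constants 0 < c < C such that for all n ≥ 3 and all positive integers a₁,…,a_n: c·q_n/a₁ ≤ N(𝟏, a₁…a_n) ≤ C·q_n/a₁ and c·q_n ≤ N(𝟐, a₁…a_n) ≤ C·q_n, where q_n is the continued fraction denominator of a₁…a_n and N(𝐭, ·) is the admissible path count v_𝐭 Â_{a₁}⋯Â_{a_n}(1,1,1)ᵀ. -/

import Mathlib

/-- `Â_k` is the 3×3 matrix with rows `(0,1,0)`, `(k+1,0,k)`, `(k,0,k−1)`. -/
def Ahat (k : ℕ) : Matrix (Fin 3) (Fin 3) ℤ :=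
  !![0, 1, 0; (k : ℤ) + 1, 0, (k : ℤ); (k : ℤ), 0, (k : ℤ) - 1]

/-- `N(𝐭, a₁…a_n) = v_𝐭 Â_{a₁} ⋯ Â_{a_n} (1,1,1)ᵀ` (`𝐭 = 0,1,2` for types 𝟏, 𝟐, 𝟑). -/
def pathCount (t : Fin 3) (l : List ℕ) : ℤ :=
  ((l.map Ahat).prod.mulVec fun _ => 1) t

/-- Continued fraction denominators: `q₀ = 1`, `q₁ = a₁`,
`q_{j+1} = a_{j+1} q_j + q_{j-1}` (here `a 0 = a₁`, `a 1 = a₂`, ...). -/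
def cfDenom (a : ℕ → ℕ) : ℕ → ℕ
  | 0 => 1
  | 1 => a 0
  | n + 2 => a (n + 1) * cfDenom a (n + 1) + cfDenom a n

/-!
Write `K(l)` for the continuant of `l`, the top-left entry of `∏ [[aᵢ, 1], [1, 0]]`, and `K'(l)` for
the bottom-left one, the continuant of the tail of `l`. The coordinates `(x, y, z)` of
`Â_{a₁} ⋯ Â_{a_n} (1,1,1)ᵀ` satisfy the exact identities `x + z = 2 K` and `y − z = 2 K'`,
both stable under the recursion defined by `Â_a`. Since all coordinates are positive, this pins
`y` between `K` and `4 K`; and `x` for the word `a₁ a₂ ⋯ a_n` is `y` for `a₂ ⋯ a_n`, whose continuant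
lies between `qₙ / (2 a₁)` and `qₙ / a₁`.
-/

open Matrix

def continuantMatrix (l : List ℕ) : Matrix (Fin 2) (Fin 2) ℤ :=
  (l.map fun a => !![(a : ℤ), 1; 1, 0]).prod

section Continuant

variable (a : ℕ) (l : List ℕ)

lemma continuantMatrix_cons :
    continuantMatrix (a :: l) = !![(a : ℤ), 1; 1, 0] * continuantMatrix l := by
  simp [continuantMatrix]

lemma continuantMatrix_cons_zero_zero :
    continuantMatrix (a :: l) 0 0 = a * continuantMatrix l 0 0 + continuantMatrix l 1 0 := by
  simp [continuantMatrix_cons, mul_apply, Fin.sum_univ_two]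

lemma continuantMatrix_cons_one_zero :
    continuantMatrix (a :: l) 1 0 = continuantMatrix l 0 0 := by
  simp [continuantMatrix_cons, mul_apply, Fin.sum_univ_two]

variable {l}

lemma continuantMatrix_one_zero_nonneg_le (hl : ∀ x ∈ l, 1 ≤ x) :
    0 ≤ continuantMatrix l 1 0 ∧ continuantMatrix l 1 0 ≤ continuantMatrix l 0 0 := by
  induction l with
  | nil => simp [continuantMatrix]
  | cons b t ih =>
    obtain ⟨h₀, h₁⟩ := ih fun x hx => hl x (List.mem_cons_of_mem b hx)
    have hb : (1 : ℤ) ≤ b := by exact_mod_cast hl b List.mem_cons_self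
    rw [continuantMatrix_cons_zero_zero, continuantMatrix_cons_one_zero]
    constructor <;> nlinarith

variable {a}

lemma continuantMatrix_cons_bounds (ha : 1 ≤ a) (hl : ∀ x ∈ l, 1 ≤ x) :
    a * continuantMatrix l 0 0 ≤ continuantMatrix (a :: l) 0 0 ∧
      continuantMatrix (a :: l) 0 0 ≤ 2 * a * continuantMatrix l 0 0 := by
  obtain ⟨h₀, h₁⟩ := continuantMatrix_one_zero_nonneg_le hl
  have ha' : (1 : ℤ) ≤ a := by exact_mod_cast ha
  rw [continuantMatrix_cons_zero_zero]
  constructor <;> nlinarith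

lemma continuantMatrix_append_singleton :
    continuantMatrix (l ++ [a]) = continuantMatrix l * !![(a : ℤ), 1; 1, 0] := by
  simp [continuantMatrix]

end Continuant

lemma continuantMatrix_range_map (a : ℕ → ℕ) (n : ℕ) :
    continuantMatrix ((List.range n).map a) 0 0 = cfDenom a n := by
  suffices h : ∀ m, continuantMatrix ((List.range (m + 1)).map a) 0 0 = cfDenom a (m + 1) ∧
      continuantMatrix ((List.range (m + 1)).map a) 0 1 = cfDenom a m by
    cases n with
    | zero => simp [continuantMatrix, cfDenom]
    | succ m => exact (h m).1
  intro m
  induction m with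
  | zero => simp [continuantMatrix, cfDenom]
  | succ m ih =>
    have hM : continuantMatrix ((List.range (m + 2)).map a) =
        continuantMatrix ((List.range (m + 1)).map a) * !![(a (m + 1) : ℤ), 1; 1, 0] := by
      rw [List.range_succ, List.map_append, List.map_singleton, continuantMatrix_append_singleton]
    simp [hM, mul_apply, Fin.sum_univ_two, ih, cfDenom]
    ring

section PathCount

variable (a : ℕ) (l : List ℕ)

lemma pathCount_nil (t : Fin 3) : pathCount t [] = 1 := by
  simp [pathCount]

lemma pathCount_cons (t : Fin 3) :
    pathCount t (a :: l) = (Ahat a *ᵥ fun s => pathCount s l) t := by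
  simp [pathCount, mulVec_mulVec]

lemma pathCount_cons_zero : pathCount 0 (a :: l) = pathCount 1 l := by
  simp [pathCount_cons, Ahat, mulVec, dotProduct, Fin.sum_univ_three]

lemma pathCount_cons_one :
    pathCount 1 (a :: l) = (a + 1) * pathCount 0 l + a * pathCount 2 l := by
  simp [pathCount_cons, Ahat, mulVec, dotProduct, Fin.sum_univ_three]

lemma pathCount_cons_two :
    pathCount 2 (a :: l) = a * pathCount 0 l + (a - 1) * pathCount 2 l := by
  simp [pathCount_cons, Ahat, mulVec, dotProduct, Fin.sum_univ_three]

lemma two_mul_continuantMatrix :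
    2 * continuantMatrix l 0 0 = pathCount 0 l + pathCount 2 l ∧
      2 * continuantMatrix l 1 0 = pathCount 1 l - pathCount 2 l := by
  induction l with
  | nil => simp [continuantMatrix, pathCount_nil]
  | cons b t ih =>
    rw [continuantMatrix_cons_zero_zero, continuantMatrix_cons_one_zero, pathCount_cons_zero,
      pathCount_cons_one, pathCount_cons_two]
    exact ⟨by linear_combination ih.2 + b * ih.1, by linear_combination ih.1⟩

variable {l}

lemma one_le_pathCount (hl : ∀ x ∈ l, 1 ≤ x) (t : Fin 3) : 1 ≤ pathCount t l := by
  induction l generalizing t with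
  | nil => simp [pathCount_nil]
  | cons b u ih =>
    have ih := ih fun x hx => hl x (List.mem_cons_of_mem b hx)
    have hb : (1 : ℤ) ≤ b := by exact_mod_cast hl b List.mem_cons_self
    fin_cases t
    · simpa [pathCount_cons_zero] using ih 1
    · show 1 ≤ pathCount 1 (b :: u)
      rw [pathCount_cons_one]; nlinarith [ih 0, ih 2]
    · show 1 ≤ pathCount 2 (b :: u)
      rw [pathCount_cons_two]; nlinarith [ih 0, ih 2]

lemma pathCount_one_le_four_mul (hl : ∀ x ∈ l, 1 ≤ x) :
    pathCount 1 l ≤ 4 * continuantMatrix l 0 0 := by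
  obtain ⟨hxz, hyz⟩ := two_mul_continuantMatrix l
  obtain ⟨-, hK⟩ := continuantMatrix_one_zero_nonneg_le hl
  linarith [one_le_pathCount hl 0]

lemma continuantMatrix_le_pathCount_one (hl : ∀ x ∈ l, 1 ≤ x) :
    continuantMatrix l 0 0 ≤ pathCount 1 l := by
  cases l with
  | nil => simp [continuantMatrix, pathCount_nil]
  | cons b t =>
    have ht : ∀ x ∈ t, 1 ≤ x := fun x hx => hl x (List.mem_cons_of_mem b hx)
    -- `y(b :: t) = 2 K(b :: t) + 2 K(t) − y(t)`, and `y(t) ≤ 2 K(t) + 2 K'(t) − 1`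
    obtain ⟨hx, hy⟩ := two_mul_continuantMatrix (b :: t)
    obtain ⟨hxt, hyt⟩ := two_mul_continuantMatrix t
    rw [continuantMatrix_cons_one_zero] at hy
    rw [pathCount_cons_zero] at hx
    have hb : (1 : ℤ) ≤ b := by exact_mod_cast hl b List.mem_cons_self
    obtain ⟨hK'₀, hK'⟩ := continuantMatrix_one_zero_nonneg_le ht
    have hK := continuantMatrix_cons_zero_zero b t
    nlinarith [one_le_pathCount ht 0]

end PathCount

/-- There are absolute constants `0 < c < C` such that for all `n ≥ 3` and all
positive `a₁,…,a_n`: `c qₙ/a₁ ≤ N(𝟏, a₁…a_n) ≤ C qₙ/a₁` and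
`c qₙ ≤ N(𝟐, a₁…a_n) ≤ C qₙ`. -/
theorem pathCount_one_two_comparable :
    ∃ c C : ℝ, 0 < c ∧ c < C ∧ ∀ n : ℕ, 3 ≤ n → ∀ a : ℕ → ℕ, (∀ i, 1 ≤ a i) →
      (c * (cfDenom a n : ℝ) / (a 0 : ℝ) ≤ (pathCount 0 ((List.range n).map a) : ℝ) ∧
        (pathCount 0 ((List.range n).map a) : ℝ) ≤ C * (cfDenom a n : ℝ) / (a 0 : ℝ)) ∧
      (c * (cfDenom a n : ℝ) ≤ (pathCount 1 ((List.range n).map a) : ℝ) ∧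
        (pathCount 1 ((List.range n).map a) : ℝ) ≤ C * (cfDenom a n : ℝ)) := by
  refine ⟨1 / 2, 4, by norm_num, by norm_num, fun n hn a ha => ?_⟩
  obtain ⟨m, rfl⟩ : ∃ m, n = m + 1 := ⟨n - 1, by omega⟩
  set t := (List.range m).map fun i => a (i + 1)
  have hl : (List.range (m + 1)).map a = a 0 :: t := by simp [t, List.range_succ_eq_map]
  have ht : ∀ x ∈ t, 1 ≤ x := by simp [t, ha]
  have hat : ∀ x ∈ a 0 :: t, 1 ≤ x := by simp [t, ha]
  have hq : (cfDenom a (m + 1) : ℝ) = (continuantMatrix (a 0 :: t) 0 0 : ℤ) := by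
    rw [← hl, continuantMatrix_range_map]; norm_cast
  obtain ⟨hK₁, hK₂⟩ := continuantMatrix_cons_bounds (ha 0) ht
  have hx₁ := continuantMatrix_le_pathCount_one ht
  have hx₂ := pathCount_one_le_four_mul ht
  have hy₁ := continuantMatrix_le_pathCount_one hat
  have hy₂ := pathCount_one_le_four_mul hat
  rify at hK₁ hK₂ hx₁ hx₂ hy₁ hy₂
  have ha₀ : (0 : ℝ) < a 0 := by exact_mod_cast ha 0
  rw [hq, hl, pathCount_cons_zero, div_le_iff₀ ha₀, le_div_iff₀ ha₀]
  refine ⟨⟨?_, ?_⟩, ?_, ?_⟩ <;> nlinarith
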